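/- Suppose for a fixed n ≥ 2 that −v_n·log(v_n/(2π²)^n) ≤ 2c_n, where v_n = 2n^{n-1}/(n-1)! and c_n = ((n+1)^n/n!)·((n+1)∑_{k=1}^n 1/k − n + log(π^n/n!)) satisfies c_n > 0 for all n. Then, for n ≥ 4, the quantity 2c_{n+1} − (−v_{n+1}·log(v_{n+1}/(2π²)^{n+1})) is strictly positive, given the numerical inequality (2/e_4)(log e_4 − log(2π²)) + log π + γ > 0 with e_4 = (5/4)^4 and γ the Euler–Mascheroni constant. -/

import Mathlib

open Real Finset

/-- `c n` is the normalized height `2 vol̂_χ(-K_{P^n_ℤ})` of projective `n`-space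
with the volume-normalized Fubini–Study metric. -/
noncomputable def heightPn (n : ℕ) : ℝ :=
  (((n : ℝ) + 1) ^ n / (Nat.factorial n : ℝ)) *
    (((n : ℝ) + 1) * (∑ k ∈ Finset.Icc 1 n, (1 : ℝ) / k) - n +
      Real.log (π ^ n / (Nat.factorial n : ℝ)))

/-- `v n` is the anticanonical volume of `P^{n-1} × P^1`. -/
noncomputable def volPP (n : ℕ) : ℝ := 2 * (n : ℝ) ^ (n - 1) / (Nat.factorial (n - 1) : ℝ)

/-! Write `2 c_n = v_{n+1} A_n` and `v_{n+1} = e_n v_n` (`A = heightPerVolPn`, `e = eSeq`).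
Dividing the hypothesis by `v_n` gives `-L_n ≤ e_n A_n` with `L_n = log (v_n / (2π²)^n)`, and the goal becomes `0 < e_{n+1} A_{n+1} + L_{n+1}`.
Now `L_{n+1} = L_n + log e_n - log (2π²)` and `A_{n+1} - A_n = (H_{n+1} - log (n+1)) + log π > γ + log π`,
so since `e_n` is increasing and `A_n > 0` the goal reduces to `0 < e_{n+1} (γ + log π) + log e_4 - log (2π²)`,
which is the numerical hypothesis multiplied by `e_{n+1} ≥ e_4`. -/

noncomputable def eSeq (n : ℕ) : ℝ := (1 + 1 / n) ^ n

lemma eSeq_pos (n : ℕ) : 0 < eSeq n := by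
  unfold eSeq; positivity

lemma eSeq_succ (n : ℕ) : eSeq (n + 1) = (((n : ℝ) + 2) / (n + 1)) ^ (n + 1) := by
  rw [eSeq]; push_cast; congr 1; field_simp; ring

lemma eSeq_le_succ (n : ℕ) : eSeq n ≤ eSeq (n + 1) := by
  rcases n.eq_zero_or_pos with rfl | hn
  · norm_num [eSeq]
  have hx : (0 : ℝ) < n := by exact_mod_cast hn
  -- Bernoulli's inequality `(1 - 1/(n+1)²)^(n+1) ≥ 1 - 1/(n+1)`.
  have bernoulli : (n : ℝ) / (n + 1) ≤ ((n : ℝ) / (n + 1) * ((n + 2) / (n + 1))) ^ (n + 1) := by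
    have hry : (n : ℝ) / (n + 1) * ((n + 2) / (n + 1)) = 1 + -1 / ((n : ℝ) + 1) ^ 2 := by
      field_simp; ring
    rw [hry]
    refine le_trans (le_of_eq ?_) (one_add_mul_le_pow ?_ (n + 1))
    · push_cast; field_simp; ring
    · rw [neg_div, neg_le_neg_iff, div_le_iff₀ (by positivity)]; nlinarith
  have he : eSeq n = (((n : ℝ) / (n + 1)) ^ n)⁻¹ := by
    rw [eSeq, ← inv_pow, inv_div]; field_simp
  rw [he, eSeq_succ, inv_le_iff_one_le_mul₀ (by positivity), mul_comm]
  rw [mul_pow, pow_succ _ n, mul_right_comm, mul_comm] at bernoulli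
  exact le_of_mul_le_mul_left (by simpa using bernoulli) (by positivity : (0 : ℝ) < n / (n + 1))

lemma monotone_eSeq : Monotone eSeq := monotone_nat_of_le_succ eSeq_le_succ

lemma volPP_succ (n : ℕ) : volPP (n + 1) = 2 * ((n : ℝ) + 1) ^ n / n.factorial := by
  simp [volPP]

lemma volPP_pos (n : ℕ) : 0 < volPP n := by
  cases n with
  | zero => norm_num [volPP]
  | succ n => rw [volPP_succ]; positivity

lemma volPP_succ_eq_eSeq_mul (n : ℕ) : volPP (n + 1) = eSeq n * volPP n := by
  cases n with
  | zero => norm_num [volPP, eSeq]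
  | succ n =>
    rw [volPP_succ, volPP_succ, eSeq_succ, div_pow, Nat.factorial_succ]
    push_cast
    field_simp
    ring

noncomputable def heightPerVolPn (n : ℕ) : ℝ :=
  ((n : ℝ) + 1) * harmonic n - n + log (π ^ n / n.factorial)

lemma sum_Icc_one_div_eq_harmonic (n : ℕ) : ∑ k ∈ Icc 1 n, (1 : ℝ) / k = harmonic n := by
  simp [harmonic_eq_sum_Icc]

lemma two_mul_heightPn (n : ℕ) : 2 * heightPn n = volPP (n + 1) * heightPerVolPn n := by
  rw [volPP_succ, heightPn, heightPerVolPn, sum_Icc_one_div_eq_harmonic]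
  ring

lemma heightPerVolPn_succ (n : ℕ) : heightPerVolPn (n + 1) =
    heightPerVolPn n + (harmonic (n + 1) - log (n + 1)) + log π := by
  have hlog : log (π ^ (n + 1) / (n + 1).factorial) =
      log (π ^ n / n.factorial) + log π - log (n + 1) := by
    rw [pow_succ, Nat.factorial_succ, Nat.cast_mul, mul_comm ((n + 1 : ℕ) : ℝ),
      mul_div_mul_comm, log_mul (by positivity) (by positivity),
      log_div pi_ne_zero (by positivity)]
    push_cast
    ring
  rw [heightPerVolPn, heightPerVolPn, hlog, harmonic_succ]
  push_cast
  field_simp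
  ring

lemma eulerMascheroniConstant_lt_harmonic_sub_log {n : ℕ} (hn : n ≠ 0) :
    eulerMascheroniConstant < harmonic n - log n := by
  simpa [eulerMascheroniSeq', hn] using eulerMascheroniConstant_lt_eulerMascheroniSeq' n

lemma heightPerVolPn_add_lt_succ (n : ℕ) :
    heightPerVolPn n + eulerMascheroniConstant + log π < heightPerVolPn (n + 1) := by
  have hγ := eulerMascheroniConstant_lt_harmonic_sub_log n.succ_ne_zero
  push_cast at hγ
  rw [heightPerVolPn_succ]
  linarith

lemma log_volPP_succ_div_pow {c : ℝ} (hc : c ≠ 0) (n : ℕ) :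
    log (volPP (n + 1) / c ^ (n + 1)) = log (volPP n / c ^ n) + log (eSeq n) - log c := by
  have hv := volPP_pos n
  have he := eSeq_pos n
  rw [volPP_succ_eq_eSeq_mul, pow_succ, mul_comm (eSeq n), mul_div_mul_comm,
    log_mul (by positivity) (by positivity), log_div he.ne' hc]
  ring

lemma eSeq_four : eSeq 4 = (5 / 4) ^ 4 := by
  norm_num [eSeq]

lemma eSeq_four_le_two_mul_pi_sq : eSeq 4 ≤ 2 * π ^ 2 := by
  rw [eSeq_four]; nlinarith [pi_gt_three]

lemma mul_log_pi_add_gamma_add_log_eSeq_four_sub_pos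
    (hnum : 0 < (2 / ((5 / 4 : ℝ) ^ 4)) *
        (log ((5 / 4 : ℝ) ^ 4) - log (2 * π ^ 2)) + log π + eulerMascheroniConstant)
    {E : ℝ} (hE : eSeq 4 ≤ E) :
    0 < E * (log π + eulerMascheroniConstant) + (log (eSeq 4) - log (2 * π ^ 2)) := by
  rw [← eSeq_four] at hnum
  set d := log (eSeq 4) - log (2 * π ^ 2)
  have he4 := eSeq_pos 4
  have hd : d ≤ 0 := sub_nonpos.2 (log_le_log he4 eSeq_four_le_two_mul_pi_sq)
  have hE2 : 1 ≤ E * (2 / eSeq 4) := by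
    rw [mul_div_assoc', le_div_iff₀ he4]; linarith
  have := mul_pos (he4.trans_le hE) hnum
  nlinarith

theorem stmt_17 (n : ℕ) (hn : 4 ≤ n)
    (hcpos : ∀ m : ℕ, 1 ≤ m → 0 < heightPn m)
    (hind : -(volPP n) * Real.log (volPP n / (2 * π ^ 2) ^ n) ≤ 2 * heightPn n)
    (hnum : 0 < (2 / ((5 / 4 : ℝ) ^ 4)) *
        (Real.log ((5 / 4 : ℝ) ^ 4) - Real.log (2 * π ^ 2)) + Real.log π +
        Real.eulerMascheroniConstant) :
    0 < 2 * heightPn (n + 1) -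
        (-(volPP (n + 1)) * Real.log (volPP (n + 1) / (2 * π ^ 2) ^ (n + 1))) := by
  set A := heightPerVolPn
  set L : ℕ → ℝ := fun k ↦ log (volPP k / (2 * π ^ 2) ^ k)
  have hA : 0 < A n := by
    have := hcpos n (by omega)
    rw [← mul_pos_iff_of_pos_left two_pos, two_mul_heightPn] at this
    exact pos_of_mul_pos_right this (volPP_pos _).le
  have hLn : -L n ≤ eSeq n * A n := by
    rw [two_mul_heightPn, volPP_succ_eq_eSeq_mul, neg_mul, ← mul_neg, mul_comm (eSeq n),
      mul_assoc] at hind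
    exact le_of_mul_le_mul_left hind (volPP_pos n)
  have hL : L (n + 1) = L n + log (eSeq n) - log (2 * π ^ 2) :=
    log_volPP_succ_div_pow (by positivity) n
  have he4 : log (eSeq 4) ≤ log (eSeq n) := log_le_log (eSeq_pos 4) (monotone_eSeq hn)
  have key : 0 < eSeq (n + 1) * A (n + 1) + L (n + 1) := calc
    0 < eSeq (n + 1) * (log π + eulerMascheroniConstant) + (log (eSeq 4) - log (2 * π ^ 2)) :=
      mul_log_pi_add_gamma_add_log_eSeq_four_sub_pos hnum (monotone_eSeq (by omega))
    _ ≤ eSeq (n + 1) * (A n + eulerMascheroniConstant + log π) - eSeq n * A n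
          + log (eSeq n) - log (2 * π ^ 2) := by
      nlinarith [mul_le_mul_of_nonneg_right (eSeq_le_succ n) hA.le]
    _ < eSeq (n + 1) * A (n + 1) + L (n + 1) := by
      rw [hL]
      nlinarith [mul_lt_mul_of_pos_left (heightPerVolPn_add_lt_succ n) (eSeq_pos (n + 1))]
  rw [two_mul_heightPn, volPP_succ_eq_eSeq_mul (n + 1)]
  linarith [mul_pos (volPP_pos (n + 1)) key]
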